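/- arXiv:1310.4917 — 2 statements merged into one kernel-verified Lean document; each statement's English description precedes it below -/
import Mathlib

section
/- If a generalized evolutionary system E is pullback asymptotically compact, then the weak pullback attractor A_w(t) is a strongly compact strong pullback attractor: the strong pullback attractor A_s(t) exists and A_s(t) = Ω_s(X,t) = Ω_w(X,t) = A_w(t). -/
open Filter Topology MeasureTheory

variable {X : Type*}

/-- Convergence of a sequence with respect to a distance function `d`. -/
def Conv (d : X → X → ℝ) (u : ℕ → X) (x : X) : Prop :=
  ∀ ε > 0, ∃ N, ∀ n ≥ N, d (u n) x < ε

/-- The `d`-distance between two paired sequences tends to zero. -/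
def DistTendsZero (d : X → X → ℝ) (u v : ℕ → X) : Prop :=
  ∀ ε > 0, ∃ N, ∀ n ≥ N, d (u n) (v n) < ε

/-- Sequential closure of a set with respect to the distance `d`. -/
def SeqClosure (d : X → X → ℝ) (A : Set X) : Set X :=
  {x | ∃ u : ℕ → X, (∀ n, u n ∈ A) ∧ Conv d u x}

/-- Sequential closedness with respect to the distance `d`. -/
def SeqClosed (d : X → X → ℝ) (A : Set X) : Prop :=
  SeqClosure d A ⊆ A

/-- Sequential compactness of a set with respect to the distance `d`. -/
def SeqCompactIn (d : X → X → ℝ) (A : Set X) : Prop :=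
  ∀ u : ℕ → X, (∀ n, u n ∈ A) →
    ∃ x ∈ A, ∃ φ : ℕ → ℕ, StrictMono φ ∧ Conv d (u ∘ φ) x

/-- `d` is a metric on `X`. -/
def IsMetric (d : X → X → ℝ) : Prop :=
  (∀ x y, 0 ≤ d x y) ∧ (∀ x y, d x y = 0 ↔ x = y) ∧ (∀ x y, d x y = d y x) ∧
  (∀ x y z, d x z ≤ d x y + d y z)

/-- Uniform convergence of trajectories on each compact subinterval `[s,T]`,
i.e. convergence in `C([s,∞);X)` with distance `d` on `X`. -/
def ConvTraj (d : X → X → ℝ) (s : ℝ) (u : ℕ → ℝ → X) (v : ℝ → X) : Prop :=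
  ∀ T : ℝ, ∀ ε > 0, ∃ N, ∀ n ≥ N, ∀ r ∈ Set.Icc s T, d (u n r) (v r) < ε

/-- A generalized evolutionary system: to each interval `[s,∞)` it assigns a
nonempty set of trajectories (encoded as functions `ℝ → X`, only the values on
`[s,∞)` being relevant), closed under restriction to later starting times. -/
structure GES (X : Type*) where
  traj : ℝ → Set (ℝ → X)
  nonempty : ∀ s : ℝ, (traj s).Nonempty
  mono : ∀ ⦃s s' : ℝ⦄, s ≤ s' → traj s ⊆ traj s'

namespace GES

variable (E : GES X)

/-- Complete trajectories: those whose restriction to every `[T,∞)` is a trajectory. -/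
def complete : Set (ℝ → X) := {u | ∀ T : ℝ, u ∈ E.traj T}

/-- `P(t,s)A = {u(t) : u ∈ E([s,∞)), u(s) ∈ A}`. -/
def P (t s : ℝ) (A : Set X) : Set X :=
  {x | ∃ u ∈ E.traj s, u s ∈ A ∧ u t = x}

/-- `P̃(t,s)A = {u(t) : u ∈ E((-∞,∞)), u(s) ∈ A}`. -/
def Ptil (t s : ℝ) (A : Set X) : Set X :=
  {x | ∃ u ∈ E.complete, u s ∈ A ∧ u t = x}

/-- The pullback omega-limit `Ω_d(A,t) = ⋂_{s≤t} cl_d(⋃_{r≤s} P(t,r)A)`. -/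
def Omega (d : X → X → ℝ) (A : Set X) (t : ℝ) : Set X :=
  ⋂ s ∈ Set.Iic t, SeqClosure d (⋃ r ∈ Set.Iic s, E.P t r A)

/-- The family `Afam` pullback attracts the set `B` in the metric `d`. -/
def PullbackAttracts (d : X → X → ℝ) (Afam : ℝ → Set X) (B : Set X) : Prop :=
  ∀ t : ℝ, ∀ ε > 0, ∃ s0 ≤ t, ∀ s ≤ s0, ∀ x ∈ E.P t s B, ∃ a ∈ Afam t, d x a < ε

/-- The `d`-pullback attractor: a family of `d`-closed, `d`-pullback attracting
sets which is minimal with respect to these properties. -/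
def IsPullbackAttractor (d : X → X → ℝ) (Afam : ℝ → Set X) : Prop :=
  (∀ t, SeqClosed d (Afam t)) ∧ E.PullbackAttracts d Afam Set.univ ∧
  ∀ B : ℝ → Set X, (∀ t, SeqClosed d (B t)) → E.PullbackAttracts d B Set.univ →
    ∀ t, Afam t ⊆ B t

/-- Pullback asymptotic compactness with respect to `d`. -/
def PullbackAsympCompact (d : X → X → ℝ) : Prop :=
  ∀ t : ℝ, ∀ s : ℕ → ℝ, (∀ n, s n ≤ t) → Tendsto s atTop atBot →
    ∀ x : ℕ → X, (∀ n, x n ∈ E.P t (s n) Set.univ) →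
      ∃ y : X, ∃ φ : ℕ → ℕ, StrictMono φ ∧ Conv d (x ∘ φ) y

/-- Pullback semi-invariance. -/
def PBSemiInv (B : ℝ → Set X) : Prop :=
  ∀ ⦃s t : ℝ⦄, s ≤ t → E.Ptil t s (B s) ⊆ B t

/-- Pullback invariance. -/
def PBInv (B : ℝ → Set X) : Prop :=
  ∀ ⦃s t : ℝ⦄, s ≤ t → E.Ptil t s (B s) = B t

/-- Pullback quasi-invariance. -/
def PBQuasiInv (B : ℝ → Set X) : Prop :=
  ∀ t : ℝ, ∀ b ∈ B t, ∃ u ∈ E.complete, u t = b ∧ ∀ s ≤ t, u s ∈ B s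

/-- Condition A1: `E([s,∞))` is compact in `C([s,∞);X_w)` for each `s`. -/
def A1 (d : X → X → ℝ) : Prop :=
  ∀ s : ℝ, ∀ u : ℕ → ℝ → X, (∀ n, u n ∈ E.traj s) →
    ∃ v ∈ E.traj s, ∃ φ : ℕ → ℕ, StrictMono φ ∧ ConvTraj d s (fun n => u (φ n)) v

end GES

/-!
A point lies in `Ω_d(A,t)` exactly when it is a `d`-limit of points `x_n ∈ P(t,s_n)A` with
`s_n → -∞`. Pullback asymptotic compactness therefore says that every such sequence with
`A = X` has a subsequence converging strongly to a point of `Ω_s(X,t)`. This makes `Ω_s(X,t)`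
strongly compact, and by contradiction it pullback attracts `X` strongly, hence also weakly.
Strong convergence implies weak convergence, so `Ω_s(X,t) ⊆ Ω_w(X,t)`; conversely a weak limit
`y` of such `x_n` is also the weak limit of a strongly convergent subsequence, whose strong limit
lies in `Ω_s(X,t)` and equals `y` by uniqueness of weak limits. Finally, for any metric the
omega-limit set is closed and lies in every closed attracting family, so once it attracts it is
the pullback attractor.
-/

section Distance

variable {X : Type*} {d : X → X → ℝ}

lemma DistTendsZero.comp {u v : ℕ → X} (h : DistTendsZero d u v) {φ : ℕ → ℕ}
    (hφ : Tendsto φ atTop atTop) : DistTendsZero d (u ∘ φ) (v ∘ φ) :=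
  fun ε hε => eventually_atTop.1 (hφ.eventually (eventually_atTop.2 (h ε hε)))

lemma Conv.comp {u : ℕ → X} {x : X} (h : Conv d u x) {φ : ℕ → ℕ}
    (hφ : Tendsto φ atTop atTop) : Conv d (u ∘ φ) x :=
  DistTendsZero.comp (v := fun _ => x) h hφ

lemma distTendsZero_of_lt_one_div {u v : ℕ → X} (h : ∀ n : ℕ, d (u n) (v n) < 1 / (n + 1)) :
    DistTendsZero d u v := by
  intro ε hε
  obtain ⟨N, hN⟩ := exists_nat_one_div_lt hε
  exact ⟨N, fun n hn => (h n).trans_le ((Nat.one_div_le_one_div hn).trans hN.le)⟩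

lemma mem_seqClosure_iff {A : Set X} {x : X} :
    x ∈ SeqClosure d A ↔ ∀ ε > 0, ∃ a ∈ A, d a x < ε := by
  constructor
  · rintro ⟨u, hu, hux⟩ ε hε
    obtain ⟨N, hN⟩ := hux ε hε
    exact ⟨u N, hu N, hN N le_rfl⟩
  · intro h
    choose u hu hux using fun n : ℕ => h (1 / (n + 1)) Nat.one_div_pos_of_nat
    exact ⟨u, hu, distTendsZero_of_lt_one_div (v := fun _ => x) hux⟩

lemma seqClosure_mono {A B : Set X} (h : A ⊆ B) : SeqClosure d A ⊆ SeqClosure d B :=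
  fun _ ⟨u, hu, hux⟩ => ⟨u, fun n => h (hu n), hux⟩

lemma seqClosure_subset_of_conv {d' : X → X → ℝ} (h : ∀ u x, Conv d u x → Conv d' u x)
    (A : Set X) : SeqClosure d A ⊆ SeqClosure d' A :=
  fun x ⟨u, hu, hux⟩ => ⟨u, hu, h u x hux⟩

namespace IsMetric

variable (hd : IsMetric d)
include hd

lemma seqClosed_seqClosure (A : Set X) : SeqClosed d (SeqClosure d A) := by
  intro x hx
  rw [mem_seqClosure_iff] at hx ⊢
  intro ε hε
  obtain ⟨a, ha, hax⟩ := hx (ε / 2) (half_pos hε)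
  obtain ⟨b, hb, hba⟩ := mem_seqClosure_iff.1 ha (ε / 2) (half_pos hε)
  exact ⟨b, hb, by linarith [hd.2.2.2 b a x]⟩

lemma conv_of_distTendsZero {u v : ℕ → X} {x : X} (hu : Conv d u x)
    (huv : DistTendsZero d u v) : Conv d v x := by
  intro ε hε
  obtain ⟨N, hN⟩ := hu (ε / 2) (half_pos hε)
  obtain ⟨M, hM⟩ := huv (ε / 2) (half_pos hε)
  refine ⟨max N M, fun n hn => ?_⟩
  linarith [hN n (le_of_max_le_left hn), hM n (le_of_max_le_right hn),
    hd.2.2.2 (v n) (u n) x, hd.2.2.1 (u n) (v n)]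

lemma conv_unique {u : ℕ → X} {x y : X} (hx : Conv d u x) (hy : Conv d u y) : x = y := by
  refine (hd.2.1 x y).1 (le_antisymm (le_of_forall_pos_lt_add fun ε hε => ?_) (hd.1 x y))
  obtain ⟨N, hN⟩ := hx (ε / 2) (half_pos hε)
  obtain ⟨M, hM⟩ := hy (ε / 2) (half_pos hε)
  linarith [hN (max N M) (le_max_left N M), hM (max N M) (le_max_right N M),
    hd.2.2.2 x (u (max N M)) y, hd.2.2.1 (u (max N M)) x]

end IsMetric

end Distance

lemma tendsto_atBot_of_le_neg_natCast {s : ℕ → ℝ} (hs : ∀ n : ℕ, s n ≤ -n) :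
    Tendsto s atTop atBot :=
  tendsto_atBot_mono hs (tendsto_neg_atTop_atBot.comp tendsto_natCast_atTop_atTop)

namespace GES

variable {X : Type*} (E : GES X) {d : X → X → ℝ}

lemma exists_mem_P_dist_lt_of_mem_omega {A : Set X} {t s ε : ℝ} {y : X}
    (hy : y ∈ E.Omega d A t) (hs : s ≤ t) (hε : 0 < ε) :
    ∃ r ≤ s, ∃ x ∈ E.P t r A, d x y < ε := by
  obtain ⟨x, hx, hxy⟩ := mem_seqClosure_iff.1 (Set.mem_iInter₂.1 hy s hs) ε hε
  obtain ⟨r, hr, hxP⟩ := Set.mem_iUnion₂.1 hx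
  exact ⟨r, hr, x, hxP, hxy⟩

lemma mem_omega_of_conv {A : Set X} {t : ℝ} {s : ℕ → ℝ} (hs : Tendsto s atTop atBot)
    {x : ℕ → X} (hx : ∀ n, x n ∈ E.P t (s n) A) {y : X} (hxy : Conv d x y) :
    y ∈ E.Omega d A t := by
  refine Set.mem_iInter₂.2 fun s' _ => ?_
  obtain ⟨N, hN⟩ := eventually_atTop.1 (tendsto_atBot.1 hs s')
  exact ⟨fun n => x (n + N),
    fun n => Set.mem_iUnion₂.2 ⟨s (n + N), hN _ (Nat.le_add_left N n), hx _⟩,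
    hxy.comp (tendsto_add_atTop_nat N)⟩

lemma seqClosed_omega (hd : IsMetric d) (A : Set X) (t : ℝ) : SeqClosed d (E.Omega d A t) :=
  fun _ hy => Set.mem_iInter₂.2 fun s hs =>
    hd.seqClosed_seqClosure _ (seqClosure_mono (Set.iInter₂_subset s hs) hy)

lemma omega_subset_of_pullbackAttracts (hd : IsMetric d) {A : Set X} {B : ℝ → Set X}
    (hBc : ∀ t, SeqClosed d (B t)) (hBa : E.PullbackAttracts d B A) (t : ℝ) :
    E.Omega d A t ⊆ B t := by
  intro y hy
  refine hBc t (mem_seqClosure_iff.2 fun ε hε => ?_)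
  obtain ⟨s₀, hs₀, hatt⟩ := hBa t (ε / 2) (half_pos hε)
  obtain ⟨r, hr, x, hxP, hxy⟩ := E.exists_mem_P_dist_lt_of_mem_omega hy hs₀ (half_pos hε)
  obtain ⟨b, hb, hxb⟩ := hatt r hr x hxP
  exact ⟨b, hb, by linarith [hd.2.2.2 b x y, hd.2.2.1 b x]⟩

lemma isPullbackAttractor_omega (hd : IsMetric d)
    (hatt : E.PullbackAttracts d (E.Omega d Set.univ) Set.univ) :
    E.IsPullbackAttractor d (E.Omega d Set.univ) :=
  ⟨E.seqClosed_omega hd Set.univ, hatt,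
    fun _ hBc hBa => E.omega_subset_of_pullbackAttracts hd hBc hBa⟩

lemma omega_subset_omega_of_conv {d' : X → X → ℝ} (h : ∀ u x, Conv d u x → Conv d' u x)
    (A : Set X) (t : ℝ) : E.Omega d A t ⊆ E.Omega d' A t :=
  Set.iInter₂_mono fun _ _ => seqClosure_subset_of_conv h _

lemma exists_subseq_conv_mem_omega (hpac : E.PullbackAsympCompact d) {t : ℝ} {s : ℕ → ℝ}
    (hs : ∀ n : ℕ, s n ≤ min t (-n)) {x : ℕ → X} (hx : ∀ n, x n ∈ E.P t (s n) Set.univ) :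
    ∃ y ∈ E.Omega d Set.univ t, ∃ φ : ℕ → ℕ, StrictMono φ ∧ Conv d (x ∘ φ) y := by
  have hs_le : ∀ n, s n ≤ t := fun n => (hs n).trans (min_le_left _ _)
  have hs_bot := tendsto_atBot_of_le_neg_natCast fun n => (hs n).trans (min_le_right _ _)
  obtain ⟨y, φ, hφ, hxy⟩ := hpac t s hs_le hs_bot x hx
  exact ⟨y, E.mem_omega_of_conv (hs_bot.comp hφ.tendsto_atTop) (fun n => hx (φ n)) hxy,
    φ, hφ, hxy⟩

section Strong

variable {ds : X → X → ℝ} (hpac : E.PullbackAsympCompact ds)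
include hpac

lemma omega_pullbackAttracts (hconv : ∀ u x, Conv ds u x → Conv d u x) :
    E.PullbackAttracts d (E.Omega ds Set.univ) Set.univ := by
  intro t ε hε
  by_contra! hfar
  choose s hs x hxP hxfar using fun n : ℕ => hfar (min t (-n)) (min_le_left _ _)
  obtain ⟨y, hy, φ, -, hxy⟩ := E.exists_subseq_conv_mem_omega hpac hs hxP
  obtain ⟨N, hN⟩ := hconv _ _ hxy ε hε
  exact (hN N le_rfl).not_ge (hxfar (φ N) y hy)

lemma seqCompactIn_omega (hds : IsMetric ds) (t : ℝ) :
    SeqCompactIn ds (E.Omega ds Set.univ t) := by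
  intro u hu
  choose s hs x hxP hxu using fun n : ℕ =>
    E.exists_mem_P_dist_lt_of_mem_omega (hu n) (min_le_left t (-n)) Nat.one_div_pos_of_nat
  obtain ⟨y, hy, φ, hφ, hxy⟩ := E.exists_subseq_conv_mem_omega hpac hs hxP
  exact ⟨y, hy, φ, hφ,
    hds.conv_of_distTendsZero hxy ((distTendsZero_of_lt_one_div hxu).comp hφ.tendsto_atTop)⟩

lemma omega_subset_omega_of_pullbackAsympCompact {dw : X → X → ℝ} (hdw : IsMetric dw)
    (hconv : ∀ u x, Conv ds u x → Conv dw u x) (t : ℝ) :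
    E.Omega dw Set.univ t ⊆ E.Omega ds Set.univ t := by
  intro y hy
  choose s hs x hxP hxy using fun n : ℕ =>
    E.exists_mem_P_dist_lt_of_mem_omega hy (min_le_left t (-n)) Nat.one_div_pos_of_nat
  obtain ⟨z, hz, φ, hφ, hxz⟩ := E.exists_subseq_conv_mem_omega hpac hs hxP
  have hxy' : Conv dw (x ∘ φ) y :=
    (distTendsZero_of_lt_one_div (v := fun _ => y) hxy).comp hφ.tendsto_atTop
  rwa [hdw.conv_unique hxy' (hconv _ _ hxz)]

end Strong

end GES

theorem stmt9_general {X : Type*} (E : GES X) (ds dw : X → X → ℝ)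
    (hds : IsMetric ds) (hdw : IsMetric dw)
    (H : ∀ u v : ℕ → X, DistTendsZero ds u v → DistTendsZero dw u v)
    (hpac : E.PullbackAsympCompact ds) :
    E.IsPullbackAttractor ds (fun t => E.Omega ds Set.univ t) ∧
    (∀ t : ℝ, SeqCompactIn ds (E.Omega ds Set.univ t)) ∧
    (∀ t : ℝ, E.Omega ds Set.univ t = E.Omega dw Set.univ t) ∧
    E.IsPullbackAttractor dw (fun t => E.Omega dw Set.univ t) := by
  have hconv : ∀ u x, Conv ds u x → Conv dw u x := fun u x => H u fun _ => x
  have hΩ : E.Omega ds Set.univ = E.Omega dw Set.univ := funext fun t =>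
    (E.omega_subset_omega_of_conv hconv Set.univ t).antisymm
      (E.omega_subset_omega_of_pullbackAsympCompact hpac hdw hconv t)
  refine ⟨E.isPullbackAttractor_omega hds (E.omega_pullbackAttracts hpac fun _ _ h => h),
    E.seqCompactIn_omega hpac hds, congrFun hΩ, E.isPullbackAttractor_omega hdw ?_⟩
  rw [← hΩ]
  exact E.omega_pullbackAttracts hpac hconv

/-- if `E` is pullback asymptotically compact then the weak
pullback attractor is a strongly compact strong pullback attractor:
`A_s(t)` exists and `A_s(t) = Ω_s(X,t) = Ω_w(X,t) = A_w(t)`. -/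
theorem stmt9 {X : Type*} (E : GES X) (ds dw : X → X → ℝ)
    (hds : IsMetric ds) (hdw : IsMetric dw)
    (hcompact : SeqCompactIn dw (Set.univ : Set X))
    (H : ∀ u v : ℕ → X, DistTendsZero ds u v → DistTendsZero dw u v)
    (hpac : E.PullbackAsympCompact ds) :
    E.IsPullbackAttractor ds (fun t => E.Omega ds Set.univ t) ∧
    (∀ t : ℝ, SeqCompactIn ds (E.Omega ds Set.univ t)) ∧
    (∀ t : ℝ, E.Omega ds Set.univ t = E.Omega dw Set.univ t) ∧
    E.IsPullbackAttractor dw (fun t => E.Omega dw Set.univ t) :=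
  stmt9_general E ds dw hds hdw H hpac
end

section
/- If E satisfies A1 and A ⊆ X satisfies Ω_w(A,t) ⊆ A for every t ∈ ℝ, then Ω_w(A,t) = Ω_s(A,t) for every t. -/
open Filter Topology MeasureTheory

variable {X : Type*}

/-! Strong convergence implies weak convergence, so `Ω_s(A,t) ⊆ Ω_w(A,t)`. Conversely, a point
`x ∈ Ω_w(A,t)` is the weak limit of `u n t` for trajectories `u n` started in `A` at times
`r n → -∞`. Given `s ≤ t`, A1 extracts a subsequence converging weakly on `[s,∞)` to a trajectory
`v`; then `v t = x` and `v s ∈ Ω_w(A,s) ⊆ A`, so `x ∈ P(t,s)A`, which lies in every strong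
closure defining `Ω_s(A,t)`. -/

theorem conv_iff_eventually {d : X → X → ℝ} {u : ℕ → X} {x : X} :
    Conv d u x ↔ ∀ ε > 0, ∀ᶠ n in atTop, d (u n) x < ε := by
  simp only [Conv, eventually_atTop]

theorem Conv.comp_tendsto {d : X → X → ℝ} {u : ℕ → X} {x : X} (h : Conv d u x)
    {ψ : ℕ → ℕ} (hψ : Tendsto ψ atTop atTop) : Conv d (u ∘ ψ) x :=
  conv_iff_eventually.2 fun ε hε => hψ.eventually (conv_iff_eventually.1 h ε hε)

theorem IsMetric.conv_const {d : X → X → ℝ} (hd : IsMetric d) (x : X) :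
    Conv d (fun _ => x) x := fun ε hε => ⟨0, fun _ _ => by rwa [(hd.2.1 x x).2 rfl]⟩

theorem IsMetric.conv_unique_s12 {d : X → X → ℝ} (hd : IsMetric d) {u : ℕ → X} {a b : X}
    (ha : Conv d u a) (hb : Conv d u b) : a = b := by
  obtain ⟨hnonneg, hzero, hsymm, htri⟩ := hd
  by_contra hne
  have hpos : 0 < d a b := (hnonneg a b).lt_of_ne fun h => hne ((hzero a b).1 h.symm)
  obtain ⟨n, han, hbn⟩ :=
    ((conv_iff_eventually.1 ha _ (half_pos hpos)).and
      (conv_iff_eventually.1 hb _ (half_pos hpos))).exists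
  linarith [htri a (u n) b, hsymm a (u n)]

theorem IsMetric.subset_seqClosure {d : X → X → ℝ} (hd : IsMetric d) (A : Set X) :
    A ⊆ SeqClosure d A := fun x hx => ⟨fun _ => x, fun _ => hx, hd.conv_const x⟩

theorem seqClosure_subset_of_distTendsZero {ds dw : X → X → ℝ}
    (H : ∀ u v : ℕ → X, DistTendsZero ds u v → DistTendsZero dw u v) (A : Set X) :
    SeqClosure ds A ⊆ SeqClosure dw A :=
  fun x ⟨u, hu, hconv⟩ => ⟨u, hu, H u (fun _ => x) hconv⟩

theorem ConvTraj.conv_apply {d : X → X → ℝ} {s : ℝ} {u : ℕ → ℝ → X} {v : ℝ → X}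
    (h : ConvTraj d s u v) {p : ℝ} (hp : s ≤ p) : Conv d (fun n => u n p) (v p) :=
  fun ε hε => (h p ε hε).imp fun _ hN n hn => hN n hn p ⟨hp, le_rfl⟩

namespace GES

variable (E : GES X)

theorem Omega_subset_Omega_of_distTendsZero {ds dw : X → X → ℝ}
    (H : ∀ u v : ℕ → X, DistTendsZero ds u v → DistTendsZero dw u v) (A : Set X) (t : ℝ) :
    E.Omega ds A t ⊆ E.Omega dw A t :=
  Set.biInter_mono subset_rfl fun _ _ => seqClosure_subset_of_distTendsZero H _

theorem mem_Omega_iff (d : X → X → ℝ) (A : Set X) (t : ℝ) (x : X) :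
    x ∈ E.Omega d A t ↔ ∃ (u : ℕ → ℝ → X) (r : ℕ → ℝ), Tendsto r atTop atBot ∧
      (∀ n, u n ∈ E.traj (r n) ∧ u n (r n) ∈ A) ∧ Conv d (fun n => u n t) x := by
  simp only [Omega, Set.mem_iInter₂, Set.mem_Iic]
  constructor
  · intro hx
    have hn : ∀ n : ℕ, ∃ (v : ℝ → X) (r : ℝ), r ≤ t - n ∧ (v ∈ E.traj r ∧ v r ∈ A) ∧
        d (v t) x < 1 / (n + 1) := by
      intro n
      obtain ⟨w, hw, hconv⟩ := hx (t - n) (by linarith [n.cast_nonneg (α := ℝ)])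
      obtain ⟨N, hN⟩ := hconv (1 / (n + 1)) Nat.one_div_pos_of_nat
      obtain ⟨r, hr, v, hv, hvA, hvt⟩ := Set.mem_iUnion₂.1 (hw N)
      exact ⟨v, r, hr, ⟨hv, hvA⟩, hvt ▸ hN N le_rfl⟩
    choose u r hr hu hdist using hn
    refine ⟨u, r, tendsto_atBot_mono hr ?_, hu, fun ε hε => ?_⟩
    · exact tendsto_atBot_add_const_left _ t
        (tendsto_neg_atTop_atBot.comp tendsto_natCast_atTop_atTop)
    · obtain ⟨N, hN⟩ := exists_nat_one_div_lt hε
      refine ⟨N, fun n hn => (hdist n).trans (lt_of_le_of_lt ?_ hN)⟩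
      gcongr
  · rintro ⟨u, r, hr, hu, hconv⟩ s -
    obtain ⟨M, hM⟩ := tendsto_atTop_atBot.1 hr s
    refine ⟨fun n => u (n + M) t, fun n => ?_, hconv.comp_tendsto (tendsto_add_atTop_nat M)⟩
    exact Set.mem_biUnion (hM _ (Nat.le_add_left M n)) ⟨u (n + M), (hu _).1, (hu _).2, rfl⟩

theorem mem_P_of_mem_Omega {d : X → X → ℝ} (hd : IsMetric d) (hA1 : E.A1 d) {A : Set X}
    {s : ℝ} (hA : E.Omega d A s ⊆ A) {t : ℝ} {x : X} (hx : x ∈ E.Omega d A t) (hst : s ≤ t) : x ∈ E.P t s A := by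
  obtain ⟨u, r, hr, hu, hconv⟩ := (E.mem_Omega_iff d A t x).1 hx
  obtain ⟨M, hM⟩ := tendsto_atTop_atBot.1 hr s
  have huM : ∀ n, u (n + M) ∈ E.traj s := fun n => E.mono (hM _ (Nat.le_add_left M n)) (hu _).1
  obtain ⟨v, hv, φ, hφ, hvconv⟩ := hA1 s _ huM
  have hψ : Tendsto (fun n => φ n + M) atTop atTop :=
    (tendsto_add_atTop_nat M).comp hφ.tendsto_atTop
  have hvt : v t = x := hd.conv_unique_s12 (hvconv.conv_apply hst) (hconv.comp_tendsto hψ)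
  have hvs : v s ∈ E.Omega d A s := (E.mem_Omega_iff d A s _).2
    ⟨_, _, hr.comp hψ, fun n => hu _, hvconv.conv_apply le_rfl⟩
  exact ⟨v, hv, hA hvs, hvt⟩

end GES

theorem stmt12_general {X : Type*} (E : GES X) (ds dw : X → X → ℝ)
    (hds : IsMetric ds) (hdw : IsMetric dw)
    (H : ∀ u v : ℕ → X, DistTendsZero ds u v → DistTendsZero dw u v)
    (hA1 : E.A1 dw) (A : Set X) (hA : ∀ t : ℝ, E.Omega dw A t ⊆ A) :
    ∀ t : ℝ, E.Omega dw A t = E.Omega ds A t := by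
  intro t
  refine Set.Subset.antisymm (fun x hx => ?_) (E.Omega_subset_Omega_of_distTendsZero H A t)
  refine Set.mem_iInter₂.2 fun s hs => hds.subset_seqClosure _ ?_
  exact Set.mem_biUnion (Set.mem_Iic.2 le_rfl) (E.mem_P_of_mem_Omega hdw hA1 (hA s) hx hs)

/-- under A1, if `Ω_w(A,t) ⊆ A` for all `t`, then
`Ω_w(A,t) = Ω_s(A,t)` for all `t`. -/
theorem stmt12 {X : Type*} (E : GES X) (ds dw : X → X → ℝ)
    (hds : IsMetric ds) (hdw : IsMetric dw)
    (hcompact : SeqCompactIn dw (Set.univ : Set X))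
    (H : ∀ u v : ℕ → X, DistTendsZero ds u v → DistTendsZero dw u v)
    (hA1 : E.A1 dw) (A : Set X) (hA : ∀ t : ℝ, E.Omega dw A t ⊆ A) :
    ∀ t : ℝ, E.Omega dw A t = E.Omega ds A t :=
  stmt12_general E ds dw hds hdw H hA1 A hA
end
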